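/- Under the testimony model (P(E_T | E ∩ H') = P(E_T | E) and P(E_T | Eᶜ ∩ H') = P(E_T | Eᶜ) for H' ∈ {H, Hᶜ}, all four probabilities P(E ∩ H), P(Eᶜ ∩ H), P(E ∩ Hᶜ), P(Eᶜ ∩ Hᶜ) positive, P(E_T | E) > 0), let λ = P(E_T | Eᶜ)/P(E_T | E) and Õ = P(E | H)/P(E | Hᶜ). If 0 < λ ≤ 1 and Õ ≥ 1, then the effective Bayes factor based on the testimony is capped both by the ideal Bayes factor and by the inverse lie factor: P(E_T | H)/P(E_T | Hᶜ) ≤ min(Õ, 1/λ). Equivalently, the weight of the reported evidence satisfies ΔJL(E_T) ≤ min(ΔJL(E), −log₁₀ λ). -/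

import Mathlib

/-!
Conditioning on `E` and `Eᶜ`, the probability of the report given `H` is the mixture
`t p + s (1 - p)` of `t = P(E_T | E)` and `s = P(E_T | Eᶜ)` with weight `p = P(E | H)`, and given
`Hᶜ` the same mixture with weight `q = P(E | Hᶜ)`. After cross-multiplying, the ratio of the two
mixtures is at most `p / q` because `s q ≤ s p`, and at most `t / s = 1 / λ` because the first
mixture is at most `t` while the second is at least `s`. The logarithmic form follows by
monotonicity of `logb 10`.
-/

open MeasureTheory Real

noncomputable def pr {Ω : Type*} [MeasurableSpace Ω] (P : Measure Ω) (A : Set Ω) : ℝ :=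
  (P A).toReal

noncomputable def cpr {Ω : Type*} [MeasurableSpace Ω] (P : Measure Ω) (A B : Set Ω) : ℝ :=
  pr P (A ∩ B) / pr P B

section

variable {Ω : Type*} [MeasurableSpace Ω] {P : Measure Ω}

lemma pr_eq_measureReal (A : Set Ω) : pr P A = P.real A := rfl

lemma cpr_nonneg (A B : Set Ω) : 0 ≤ cpr P A B :=
  div_nonneg ENNReal.toReal_nonneg ENNReal.toReal_nonneg

lemma pr_ne_zero_of_cpr_ne_zero {A B : Set Ω} (h : cpr P A B ≠ 0) : pr P B ≠ 0 :=
  fun hB => h (by rw [cpr, hB, div_zero])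

variable [IsFiniteMeasure P]

lemma cpr_le_one (A B : Set Ω) : cpr P A B ≤ 1 :=
  div_le_one_of_le₀ (measureReal_mono Set.inter_subset_right) ENNReal.toReal_nonneg

lemma pr_inter_eq_cpr_mul (A B : Set Ω) : pr P (A ∩ B) = cpr P A B * pr P B := by
  by_cases hB : pr P B = 0
  · simp only [pr_eq_measureReal] at hB ⊢
    rw [hB, mul_zero, measureReal_mono_null Set.inter_subset_right hB]
  · exact (div_mul_cancel₀ _ hB).symm

lemma pr_inter_add_pr_compl_inter {E : Set Ω} (hE : MeasurableSet E) (A : Set Ω) :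
    pr P (E ∩ A) + pr P (Eᶜ ∩ A) = pr P A := by
  simpa only [pr_eq_measureReal, Set.inter_comm A, Set.sdiff_eq] using
    measureReal_inter_add_sdiff (μ := P) (s := A) hE

lemma cpr_compl {E B : Set Ω} (hE : MeasurableSet E) (hB : pr P B ≠ 0) :
    cpr P Eᶜ B = 1 - cpr P E B := by
  rw [eq_sub_iff_add_eq', cpr, cpr, ← add_div, pr_inter_add_pr_compl_inter hE, div_self hB]

lemma cpr_eq_of_cpr_inter_eq {T E B : Set Ω} (hE : MeasurableSet E) (hB : pr P B ≠ 0)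
    (hTE : cpr P T (E ∩ B) = cpr P T E) (hTEc : cpr P T (Eᶜ ∩ B) = cpr P T Eᶜ) :
    cpr P T B = cpr P T E * cpr P E B + cpr P T Eᶜ * (1 - cpr P E B) := by
  have hsplit : pr P (T ∩ B) = pr P (T ∩ (E ∩ B)) + pr P (T ∩ (Eᶜ ∩ B)) := by
    rw [← pr_inter_add_pr_compl_inter hE (T ∩ B), Set.inter_left_comm E, Set.inter_left_comm Eᶜ]
  rw [← cpr_compl hE hB, cpr, hsplit, pr_inter_eq_cpr_mul T, pr_inter_eq_cpr_mul T, hTE, hTEc,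
    pr_inter_eq_cpr_mul E, pr_inter_eq_cpr_mul Eᶜ]
  field_simp

end

lemma mix_pos {s t p : ℝ} (hs : 0 < s) (ht : 0 < t) (hp0 : 0 ≤ p) (hp1 : p ≤ 1) :
    0 < t * p + s * (1 - p) := by
  rcases hp0.eq_or_lt with rfl | hp
  · simpa using hs
  · exact add_pos_of_pos_of_nonneg (mul_pos ht hp) (mul_nonneg hs.le (sub_nonneg.2 hp1))

lemma mix_div_mix_le_weight_div {s t p q : ℝ} (hs : 0 ≤ s) (ht : 0 < t) (hq : 0 < q)
    (hqp : q ≤ p) (hp : p ≤ 1) :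
    (t * p + s * (1 - p)) / (t * q + s * (1 - q)) ≤ p / q := by
  rw [div_le_div_iff₀ (by nlinarith) hq]
  nlinarith [mul_nonneg hs (sub_nonneg.2 hqp)]

lemma mix_div_mix_le_endpoint_div {s t p q : ℝ} (hs : 0 < s) (hst : s ≤ t) (hq : 0 ≤ q)
    (hp : p ≤ 1) :
    (t * p + s * (1 - p)) / (t * q + s * (1 - q)) ≤ t / s := by
  rw [div_le_div_iff₀ (by nlinarith) hs]
  nlinarith [mul_nonneg (mul_nonneg hs.le (sub_nonneg.2 hst)) (sub_nonneg.2 hp),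
    mul_nonneg (mul_nonneg (hs.trans_le hst).le (sub_nonneg.2 hst)) hq]

lemma logb_le_min_logb {b x y z : ℝ} (hb : 1 < b) (hx : 0 < x) (h : x ≤ min y z) :
    logb b x ≤ min (logb b y) (logb b z) :=
  le_min (logb_le_logb_of_le hb hx (h.trans (min_le_left y z)))
    (logb_le_logb_of_le hb hx (h.trans (min_le_right y z)))

theorem testimony_bayes_factor_upper_bound_general
    {Ω : Type*} [MeasurableSpace Ω] (P : Measure Ω) [IsProbabilityMeasure P]
    (Et E H : Set Ω)
    (hE : MeasurableSet E)
    (ht1 : cpr P Et (E ∩ H) = cpr P Et E)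
    (ht2 : cpr P Et (Eᶜ ∩ H) = cpr P Et Eᶜ)
    (ht3 : cpr P Et (E ∩ Hᶜ) = cpr P Et E)
    (ht4 : cpr P Et (Eᶜ ∩ Hᶜ) = cpr P Et Eᶜ)
    (hTE : 0 < cpr P Et E)
    (hl0 : 0 < cpr P Et Eᶜ / cpr P Et E) (hl1 : cpr P Et Eᶜ / cpr P Et E ≤ 1)
    (hO : 1 ≤ cpr P E H / cpr P E Hᶜ) :
    cpr P Et H / cpr P Et Hᶜ ≤
        min (cpr P E H / cpr P E Hᶜ) (1 / (cpr P Et Eᶜ / cpr P Et E)) ∧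
      Real.logb 10 (cpr P Et H / cpr P Et Hᶜ) ≤
        min (Real.logb 10 (cpr P E H / cpr P E Hᶜ))
          (- Real.logb 10 (cpr P Et Eᶜ / cpr P Et E)) := by
  have hq : 0 < cpr P E Hᶜ :=
    (cpr_nonneg E Hᶜ).lt_of_ne fun h => by rw [← h, div_zero] at hO; exact one_pos.not_ge hO
  have hqp : cpr P E Hᶜ ≤ cpr P E H := (one_le_div hq).1 hO
  have hp : 0 < cpr P E H := hq.trans_le hqp
  have hs : 0 < cpr P Et Eᶜ := (div_pos_iff_of_pos_right hTE).1 hl0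
  have hst : cpr P Et Eᶜ ≤ cpr P Et E := (div_le_one hTE).1 hl1
  rw [cpr_eq_of_cpr_inter_eq hE (pr_ne_zero_of_cpr_ne_zero hp.ne') ht1 ht2,
    cpr_eq_of_cpr_inter_eq hE (pr_ne_zero_of_cpr_ne_zero hq.ne') ht3 ht4]
  have hbound := le_min (mix_div_mix_le_weight_div hs.le hTE hq hqp (cpr_le_one E H))
    ((mix_div_mix_le_endpoint_div hs hst hq.le (cpr_le_one E H)).trans_eq
      (one_div_div _ _).symm)
  refine ⟨hbound, ?_⟩
  rw [← logb_inv, ← one_div]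
  exact logb_le_min_logb (by norm_num)
    (div_pos (mix_pos hs hTE hp.le (cpr_le_one E H)) (mix_pos hs hTE hq.le (cpr_le_one E Hᶜ)))
    hbound

/-- If `0 < λ ≤ 1` (lie factor) and `Õ ≥ 1` (ideal Bayes factor), the effective Bayes
factor based on the testimony is capped both by `Õ` and by `1/λ`; equivalently, the
weight of the reported evidence satisfies `ΔJL(Eₜ) ≤ min(ΔJL(E), −log₁₀ λ)`. -/
theorem testimony_bayes_factor_upper_bound
    {Ω : Type*} [MeasurableSpace Ω] (P : Measure Ω) [IsProbabilityMeasure P]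
    (Et E H : Set Ω)
    (hEt : MeasurableSet Et) (hE : MeasurableSet E) (hH : MeasurableSet H)
    (h1 : 0 < pr P (E ∩ H)) (h2 : 0 < pr P (Eᶜ ∩ H))
    (h3 : 0 < pr P (E ∩ Hᶜ)) (h4 : 0 < pr P (Eᶜ ∩ Hᶜ))
    (ht1 : cpr P Et (E ∩ H) = cpr P Et E)
    (ht2 : cpr P Et (Eᶜ ∩ H) = cpr P Et Eᶜ)
    (ht3 : cpr P Et (E ∩ Hᶜ) = cpr P Et E)
    (ht4 : cpr P Et (Eᶜ ∩ Hᶜ) = cpr P Et Eᶜ)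
    (hTE : 0 < cpr P Et E)
    (hl0 : 0 < cpr P Et Eᶜ / cpr P Et E) (hl1 : cpr P Et Eᶜ / cpr P Et E ≤ 1)
    (hO : 1 ≤ cpr P E H / cpr P E Hᶜ) :
    cpr P Et H / cpr P Et Hᶜ ≤
        min (cpr P E H / cpr P E Hᶜ) (1 / (cpr P Et Eᶜ / cpr P Et E)) ∧
      Real.logb 10 (cpr P Et H / cpr P Et Hᶜ) ≤
        min (Real.logb 10 (cpr P E H / cpr P E Hᶜ))
          (- Real.logb 10 (cpr P Et Eᶜ / cpr P Et E)) :=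
  testimony_bayes_factor_upper_bound_general P Et E H hE ht1 ht2 ht3 ht4 hTE hl0 hl1 hO
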